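/- arXiv:2403.12842 — 3 statements merged into one kernel-verified Lean document; each statement's English description precedes it below -/
import Mathlib

section
/- For the pendulum on a cart with exterior impact map Δ(θ̇, ẋ) = (θ̇ + (2/ℓ)ẋ cos θ, −ẋ), the mechanical connection A(θ̇, ẋ) = ẋ + (mℓ/(M+m))θ̇ cos θ is NOT preserved in general; specifically, there exist parameters m, M, ℓ > 0, an angle θ, and a velocity (θ̇, ẋ) with A(Δ(θ̇, ẋ)) ≠ A(θ̇, ẋ). -/
theorem exterior_impact_not_preserve_connection :
    ∃ (m M l θ : ℝ) (v : ℝ × ℝ), 0 < m ∧ 0 < M ∧ 0 < l ∧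
      ((-v.2) + (m * l / (M + m)) * (v.1 + (2 / l) * v.2 * Real.cos θ) * Real.cos θ)
        ≠ (v.2 + (m * l / (M + m)) * v.1 * Real.cos θ) := by
  refine ⟨1, 1, 1, 0, (0, 1), one_pos, one_pos, one_pos, ?_⟩
  simp [Real.cos_zero]
  norm_num
end

section
/- The interior impact map of the pendulum on a cart preserves the momentum p_x: writing p_θ = mℓ²θ̇ + mℓẋ cos θ and p_x = mℓθ̇ cos θ + (M+m)ẋ, if (θ̇⁺, ẋ⁺) = Δ(θ̇, ẋ) = (−θ̇, ẋ + (2mℓ/(M+m))θ̇ cos θ), then p_x⁺ = p_x and p_θ⁺ = −p_θ + (2mℓ/(M+m)) p_x cos θ. -/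
theorem interior_impact_momenta
    (m M l θ : ℝ) (hm : 0 < m) (hM : 0 < M) (hl : 0 < l)
    (pθ px : ℝ × ℝ → ℝ)
    (hpθ : ∀ v : ℝ × ℝ, pθ v = m * l^2 * v.1 + m * l * v.2 * Real.cos θ)
    (hpx : ∀ v : ℝ × ℝ, px v = m * l * v.1 * Real.cos θ + (M + m) * v.2)
    (Δ : ℝ × ℝ → ℝ × ℝ)
    (hΔ : ∀ v : ℝ × ℝ, Δ v = (-v.1, v.2 + (2 * m * l / (M + m)) * v.1 * Real.cos θ)) :
    ∀ v : ℝ × ℝ, px (Δ v) = px v ∧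
      pθ (Δ v) = -pθ v + (2 * m * l / (M + m)) * px v * Real.cos θ := by
  intro v
  have hMm : (M + m) ≠ 0 := by positivity
  simp only [hpθ, hpx, hΔ]
  constructor <;> field_simp <;> ring
end

section
/- For the pendulum on a cart, the interior impact map in momentum coordinates, p_θ ↦ −p_θ + (2mℓ/(M+m)) p_x cos θ, p_x ↦ p_x, preserves the Hamiltonian kinetic energy H(p_θ, p_x) = ½ (p_θ, p_x) g_θ⁻¹ (p_θ, p_x)ᵀ, where g_θ is the mass matrix with entries g₁₁ = mℓ², g₁₂ = g₂₁ = mℓ cos θ, g₂₂ = M+m, provided det g_θ ≠ 0. -/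
/-! The impact map fixes `p_x` and reflects `p_θ` about `(b/d) p_x`, where `b = mℓ cos θ` and
`d = M + m` are the off-diagonal and lower diagonal entries of `g_θ`. Since
`g_θ⁻¹ = det⁻¹ • adj g_θ`, the kinetic energy is `det⁻¹ (d p_θ² − 2b p_θ p_x + a p_x²) / 2`, and
completing the square, `d p_θ² − 2b p_θ p_x = d (p_θ − (b/d) p_x)² − (b²/d) p_x²`, shows that this
reflection leaves it unchanged. -/

open Matrix

variable {K : Type*} [Field K]

theorem Matrix.dotProduct_inv_mulVec_fin_two_symm (a b d : K) (p : Fin 2 → K) :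
    p ⬝ᵥ (!![a, b; b, d])⁻¹ *ᵥ p =
      (a * d - b * b)⁻¹ * (d * p 0 ^ 2 - 2 * b * p 0 * p 1 + a * p 1 ^ 2) := by
  rw [inv_def, det_fin_two_of, Ring.inverse_eq_inv, adjugate_fin_two_of, smul_mulVec,
    dotProduct_smul, smul_eq_mul]
  simp only [dotProduct, mulVec, Fin.sum_univ_two, of_apply, cons_val', cons_val_zero,
    cons_val_one, cons_val_fin_one, empty_val']
  ring

theorem binaryQuadratic_reflect_eq {a b d : K} (hd : d ≠ 0) (x y : K) :
    d * (-x + 2 * (b / d) * y) ^ 2 - 2 * b * (-x + 2 * (b / d) * y) * y + a * y ^ 2 =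
      d * x ^ 2 - 2 * b * x * y + a * y ^ 2 := by
  field_simp
  ring

theorem Matrix.dotProduct_inv_mulVec_fin_two_symm_reflect {a b d : K} (hd : d ≠ 0)
    (p : Fin 2 → K) :
    ![-p 0 + 2 * (b / d) * p 1, p 1] ⬝ᵥ (!![a, b; b, d])⁻¹ *ᵥ ![-p 0 + 2 * (b / d) * p 1, p 1] =
      p ⬝ᵥ (!![a, b; b, d])⁻¹ *ᵥ p := by
  simp only [dotProduct_inv_mulVec_fin_two_symm, cons_val_zero, cons_val_one,
    binaryQuadratic_reflect_eq hd]

theorem interior_impact_preserves_hamiltonian_general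
    (m M l θ : ℝ) (hm : 0 < m) (hM : 0 < M)
    (g : Matrix (Fin 2) (Fin 2) ℝ)
    (hg : g = !![m * l^2, m * l * Real.cos θ; m * l * Real.cos θ, M + m])
    (H : (Fin 2 → ℝ) → ℝ)
    (hH : ∀ p : Fin 2 → ℝ, H p = (1/2) * (p ⬝ᵥ (g⁻¹).mulVec p))
    (Δ : (Fin 2 → ℝ) → (Fin 2 → ℝ))
    (hΔ : ∀ p : Fin 2 → ℝ,
      Δ p = ![-p 0 + (2 * m * l / (M + m)) * p 1 * Real.cos θ, p 1]) :
    ∀ p : Fin 2 → ℝ, H (Δ p) = H p := by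
  intro p
  have hΔ' : Δ p = ![-p 0 + 2 * (m * l * Real.cos θ / (M + m)) * p 1, p 1] := by
    rw [hΔ]; ring_nf
  rw [hH, hH, hΔ', hg, dotProduct_inv_mulVec_fin_two_symm_reflect (by positivity)]

theorem interior_impact_preserves_hamiltonian
    (m M l θ : ℝ) (hm : 0 < m) (hM : 0 < M) (hl : 0 < l)
    (hdet : m * l^2 * (M + m) - m^2 * l^2 * (Real.cos θ)^2 ≠ 0)
    (g : Matrix (Fin 2) (Fin 2) ℝ)
    (hg : g = !![m * l^2, m * l * Real.cos θ; m * l * Real.cos θ, M + m])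
    (H : (Fin 2 → ℝ) → ℝ)
    (hH : ∀ p : Fin 2 → ℝ, H p = (1/2) * (p ⬝ᵥ (g⁻¹).mulVec p))
    (Δ : (Fin 2 → ℝ) → (Fin 2 → ℝ))
    (hΔ : ∀ p : Fin 2 → ℝ,
      Δ p = ![-p 0 + (2 * m * l / (M + m)) * p 1 * Real.cos θ, p 1]) :
    ∀ p : Fin 2 → ℝ, H (Δ p) = H p :=
  interior_impact_preserves_hamiltonian_general m M l θ hm hM g hg H hH Δ hΔ
end
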